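/- (Per-step descent inequality for a biased preconditioned step.) Let f : ℝ^d → ℝ be differentiable with L-Lipschitz gradient (L > 0), let θ ∈ ℝ^d, η > 0, 0 ≤ ρ < 1, σ ≥ 0, and let H be a symmetric d×d matrix with μ I ⪯ H ⪯ M I for 0 < μ ≤ M. Let û be a square-integrable ℝ^d-valued random vector such that the bias b := E[û] − H∇f(θ) satisfies ‖b‖ ≤ ρ μ ‖∇f(θ)‖ and E[‖û − E[û]‖²] ≤ σ². Then E[f(θ − η û)] ≤ f(θ) − ( η μ (1−ρ) − (L η²/2)(M + ρμ)² ) ‖∇f(θ)‖² + (L η² / 2) σ². -/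

import Mathlib

/-!
Integrating the quadratic upper bound `f (θ - η u) ≤ f θ - η ⟪∇f θ, u⟫ + (L η² / 2) ‖u‖²` gives
`E f(θ - η û) ≤ f θ - η ⟪∇f θ, E û⟫ + (L η² / 2) (E ‖û - E û‖² + ‖E û‖²)`.
Writing `E û = H ∇f θ + b`, the bias bound gives `⟪∇f θ, E û⟫ ≥ μ (1 - ρ) ‖∇f θ‖²`, and since
`0 ⪯ H ⪯ M` forces `‖H‖ ≤ M`, also `‖E û‖ ≤ (M + ρ μ) ‖∇f θ‖`.
-/

open MeasureTheory
open scoped RealInnerProductSpace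

open Set in
theorem norm_sub_sub_fderiv_apply_le_of_lipschitz
    {E F : Type*} [NormedAddCommGroup E] [NormedSpace ℝ E] [NormedAddCommGroup F]
    [NormedSpace ℝ F] {f : E → F} {f' : E → E →L[ℝ] F} {L : ℝ}
    (hf : ∀ x, HasFDerivAt f (f' x) x) (hf' : ∀ x y, ‖f' x - f' y‖ ≤ L * ‖x - y‖) (x y : E) :
    ‖f y - f x - f' x (y - x)‖ ≤ L / 2 * ‖y - x‖ ^ 2 := by
  set v := y - x
  -- the remainder along the segment grows at most like `t ↦ L t² ‖v‖² / 2`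
  have hderiv : ∀ t : ℝ, HasDerivAt (fun t : ℝ => f (x + t • v) - f x - t • f' x v)
      (f' (x + t • v) v - f' x v) t := by
    intro t
    have hline : HasDerivAt (fun t : ℝ => x + t • v) v t := by
      simpa using ((hasDerivAt_id t).smul_const v).const_add x
    exact (((hf _).comp_hasDerivAt t hline).sub_const _).sub
      (by simpa using (hasDerivAt_id t).smul_const (f' x v))
  have hbound : ∀ t ∈ Ico (0 : ℝ) 1, ‖f' (x + t • v) v - f' x v‖ ≤ L * ‖v‖ ^ 2 * t := by
    rintro t ⟨ht0, -⟩
    calc ‖f' (x + t • v) v - f' x v‖ = ‖(f' (x + t • v) - f' x) v‖ := by rw [sub_apply]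
      _ ≤ ‖f' (x + t • v) - f' x‖ * ‖v‖ := ContinuousLinearMap.le_opNorm _ _
      _ ≤ L * ‖(x + t • v) - x‖ * ‖v‖ := by gcongr; exact hf' _ _
      _ = L * ‖v‖ ^ 2 * t := by
        rw [add_sub_cancel_left, norm_smul, Real.norm_of_nonneg ht0]; ring
  have hB : ∀ t : ℝ, HasDerivAt (fun t : ℝ => L / 2 * ‖v‖ ^ 2 * t ^ 2) (L * ‖v‖ ^ 2 * t) t :=
    fun t => ((hasDerivAt_pow 2 t).const_mul (L / 2 * ‖v‖ ^ 2)).congr_deriv (by norm_num; ring)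
  simpa [v] using image_norm_le_of_norm_deriv_right_le_deriv_boundary
    (fun t _ => (hderiv t).continuousAt.continuousWithinAt)
    (fun t _ => (hderiv t).hasDerivWithinAt) (by simp) hB hbound (right_mem_Icc.2 zero_le_one)

section

variable {E : Type*} [NormedAddCommGroup E] [InnerProductSpace ℝ E] [CompleteSpace E]
  {f : E → ℝ} {L : ℝ}

theorem abs_sub_sub_inner_gradient_le (hf : Differentiable ℝ f)
    (hlip : ∀ x y, ‖gradient f x - gradient f y‖ ≤ L * ‖x - y‖) (x y : E) :
    |f y - f x - ⟪gradient f x, y - x⟫| ≤ L / 2 * ‖y - x‖ ^ 2 := by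
  refine norm_sub_sub_fderiv_apply_le_of_lipschitz (fun x => (hf x).hasFDerivAt)
    (fun x y => ?_) x y |>.trans_eq' ?_
  · rw [← toDual_gradient, ← toDual_gradient, ← map_sub, LinearIsometryEquiv.norm_map]
    exact hlip x y
  · rw [← toDual_gradient, InnerProductSpace.toDual_apply_apply, Real.norm_eq_abs]

variable {Ω : Type*} [MeasurableSpace Ω] {P : Measure Ω} [IsProbabilityMeasure P]
  {u : Ω → E}

theorem integral_norm_sq_eq_integral_norm_sub_sq_add (hu : MemLp u 2 P) :
    ∫ ω, ‖u ω‖ ^ 2 ∂P = ∫ ω, ‖u ω - ∫ ω', u ω' ∂P‖ ^ 2 ∂P + ‖∫ ω, u ω ∂P‖ ^ 2 := by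
  set m := ∫ ω, u ω ∂P
  have hu1 : Integrable u P := hu.integrable one_le_two
  have hexpand : ∀ ω, ‖u ω - m‖ ^ 2 = ‖u ω‖ ^ 2 - 2 * ⟪m, u ω⟫ + ‖m‖ ^ 2 := fun ω => by
    rw [norm_sub_sq_real, real_inner_comm]
  have hsq : Integrable (fun ω => ‖u ω‖ ^ 2) P := hu.norm.integrable_sq
  have hcross : Integrable (fun ω => 2 * ⟪m, u ω⟫) P := (hu1.const_inner m).const_mul 2
  simp_rw [hexpand]
  rw [integral_add (f := fun ω => ‖u ω‖ ^ 2 - 2 * ⟪m, u ω⟫) (hsq.sub hcross)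
    (integrable_const _), integral_sub hsq hcross, integral_const_mul, integral_inner hu1,
    real_inner_self_eq_norm_sq, integral_const, probReal_univ, one_smul]
  ring

theorem integral_comp_sub_smul_le_of_lipschitz_gradient (hf : Differentiable ℝ f)
    (hlip : ∀ x y, ‖gradient f x - gradient f y‖ ≤ L * ‖x - y‖) (hu : MemLp u 2 P) (θ : E)
    (η : ℝ) :
    ∫ ω, f (θ - η • u ω) ∂P
      ≤ f θ - η * ⟪gradient f θ, ∫ ω, u ω ∂P⟫ + L * η ^ 2 / 2 * ∫ ω, ‖u ω‖ ^ 2 ∂P := by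
  set g := gradient f θ
  have hu1 : Integrable u P := hu.integrable one_le_two
  have hlin : Integrable (fun ω => f θ - η * ⟪g, u ω⟫) P :=
    (integrable_const _).sub ((hu1.const_inner g).const_mul η)
  have hquad : Integrable (fun ω => L * η ^ 2 / 2 * ‖u ω‖ ^ 2) P :=
    hu.norm.integrable_sq.const_mul _
  have hrem : ∀ ω, |f (θ - η • u ω) - (f θ - η * ⟪g, u ω⟫)| ≤ L * η ^ 2 / 2 * ‖u ω‖ ^ 2 := by
    intro ω
    have h := abs_sub_sub_inner_gradient_le hf hlip θ (θ - η • u ω)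
    rw [sub_sub_cancel_left, inner_neg_right, real_inner_smul_right, norm_neg, norm_smul,
      mul_pow, Real.norm_eq_abs, sq_abs] at h
    calc |f (θ - η • u ω) - (f θ - η * ⟪g, u ω⟫)|
        = |f (θ - η • u ω) - f θ - -(η * ⟪g, u ω⟫)| := by ring_nf
      _ ≤ L / 2 * (η ^ 2 * ‖u ω‖ ^ 2) := h
      _ = L * η ^ 2 / 2 * ‖u ω‖ ^ 2 := by ring
  have hmeas : AEStronglyMeasurable (fun ω => f (θ - η • u ω)) P :=
    hf.continuous.comp_aestronglyMeasurable
      (aestronglyMeasurable_const.sub (hu1.aestronglyMeasurable.const_smul η))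
  have hint : Integrable (fun ω => f (θ - η • u ω)) P := by
    simpa using (hquad.mono' (hmeas.sub hlin.aestronglyMeasurable)
      (ae_of_all _ fun ω => (Real.norm_eq_abs _).trans_le (hrem ω))).add hlin
  calc ∫ ω, f (θ - η • u ω) ∂P
      ≤ ∫ ω, (f θ - η * ⟪g, u ω⟫ + L * η ^ 2 / 2 * ‖u ω‖ ^ 2) ∂P :=
        integral_mono hint (hlin.add hquad) fun ω => by linarith [(abs_le.mp (hrem ω)).2]
    _ = f θ - η * ⟪g, ∫ ω, u ω ∂P⟫ + L * η ^ 2 / 2 * ∫ ω, ‖u ω‖ ^ 2 ∂P := by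
      rw [integral_add hlin hquad, integral_sub (integrable_const _)
        ((hu1.const_inner g).const_mul η), integral_const_mul, integral_const_mul,
        integral_inner hu1, integral_const, probReal_univ, one_smul]

end

theorem ContinuousLinearMap.opNorm_le_of_abs_inner_self_le {𝕜 E : Type*} [RCLike 𝕜]
    [NormedAddCommGroup E] [InnerProductSpace 𝕜 E] {T : E →L[𝕜] E}
    (hT : (T : E →ₗ[𝕜] E).IsSymmetric) {M : ℝ} (hM : 0 ≤ M)
    (h : ∀ x, |RCLike.re (inner 𝕜 (T x) x)| ≤ M * ‖x‖ ^ 2) : ‖T‖ ≤ M := by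
  rw [T.norm_eq_iSup_rayleighQuotient hT]
  refine ciSup_le fun x => ?_
  rcases eq_or_ne x 0 with rfl | hx
  · simpa using hM
  · rw [rayleighQuotient, reApplyInnerSelf_apply, abs_div, abs_sq,
      div_le_iff₀ (by positivity)]
    exact h x

theorem Matrix.IsSymm.norm_toEuclideanLin_apply_le {n : Type*} [Fintype n] [DecidableEq n]
    {H : Matrix n n ℝ} (hH : H.IsSymm) {M : ℝ} (hM : 0 ≤ M)
    (hpos : ∀ x, 0 ≤ ⟪x, H.toEuclideanLin x⟫) (hle : ∀ x, ⟪x, H.toEuclideanLin x⟫ ≤ M * ‖x‖ ^ 2)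
    (x : EuclideanSpace ℝ n) : ‖H.toEuclideanLin x‖ ≤ M * ‖x‖ := by
  refine (toEuclideanCLM (𝕜 := ℝ) H).le_of_opNorm_le
    (ContinuousLinearMap.opNorm_le_of_abs_inner_self_le ?_ hM fun y => ?_) x
  · exact isSymmetric_toEuclideanLin_iff.mpr (isHermitian_iff_isSymm.mpr hH)
  · rw [RCLike.re_to_real, real_inner_comm]
    exact (abs_of_nonneg (hpos y)).trans_le (hle y)

theorem sub_mul_norm_sq_le_inner_of_norm_sub_le {E : Type*} [NormedAddCommGroup E]
    [InnerProductSpace ℝ E] {g v w : E} {μ ε : ℝ} (hw : μ * ‖g‖ ^ 2 ≤ ⟪g, w⟫)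
    (hv : ‖v - w‖ ≤ ε * ‖g‖) : (μ - ε) * ‖g‖ ^ 2 ≤ ⟪g, v⟫ :=
  calc (μ - ε) * ‖g‖ ^ 2 = μ * ‖g‖ ^ 2 - ‖g‖ * (ε * ‖g‖) := by ring
    _ ≤ ⟪g, w⟫ - ‖g‖ * ‖v - w‖ := by gcongr
    _ ≤ ⟪g, w⟫ + ⟪g, v - w⟫ := by linarith [neg_le_of_abs_le (abs_real_inner_le_norm g (v - w))]
    _ = ⟪g, v⟫ := by rw [inner_sub_right]; ring

theorem per_step_descent_inequality_general
    {Ω : Type*} [MeasurableSpace Ω] (μP : Measure Ω) [IsProbabilityMeasure μP]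
    {d : ℕ} (f : EuclideanSpace ℝ (Fin d) → ℝ)
    (L : ℝ) (hL : 0 < L)
    (hdiff : Differentiable ℝ f)
    (hlip : ∀ x y, ‖gradient f x - gradient f y‖ ≤ L * ‖x - y‖)
    (θ : EuclideanSpace ℝ (Fin d))
    (η ρ σ : ℝ) (hη : 0 < η)
    (H : Matrix (Fin d) (Fin d) ℝ) (hsymm : H.IsSymm)
    (muH M : ℝ) (hmuH : 0 < muH) (hM : muH ≤ M)
    (hbounds : ∀ x : EuclideanSpace ℝ (Fin d),
      muH * ‖x‖ ^ 2 ≤ ⟪x, Matrix.toEuclideanLin H x⟫ ∧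
      ⟪x, Matrix.toEuclideanLin H x⟫ ≤ M * ‖x‖ ^ 2)
    (u : Ω → EuclideanSpace ℝ (Fin d))
    (hu2 : MemLp u 2 μP)
    (hb : ‖(∫ ω, u ω ∂μP) - Matrix.toEuclideanLin H (gradient f θ)‖
      ≤ ρ * muH * ‖gradient f θ‖)
    (hvar : ∫ ω, ‖u ω - ∫ ω', u ω' ∂μP‖ ^ 2 ∂μP ≤ σ ^ 2) :
    ∫ ω, f (θ - η • u ω) ∂μP
      ≤ f θ
        - (η * muH * (1 - ρ) - (L * η ^ 2 / 2) * (M + ρ * muH) ^ 2)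
          * ‖gradient f θ‖ ^ 2
        + (L * η ^ 2 / 2) * σ ^ 2 := by
  set g := gradient f θ
  set m := ∫ ω, u ω ∂μP
  have hHg : ‖H.toEuclideanLin g‖ ≤ M * ‖g‖ :=
    hsymm.norm_toEuclideanLin_apply_le (hmuH.le.trans hM)
      (fun x => (mul_nonneg hmuH.le (sq_nonneg _)).trans (hbounds x).1) (fun x => (hbounds x).2) g
  have hinner : (muH - ρ * muH) * ‖g‖ ^ 2 ≤ ⟪g, m⟫ :=
    sub_mul_norm_sq_le_inner_of_norm_sub_le (hbounds g).1 hb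
  have hm : ‖m‖ ^ 2 ≤ (M + ρ * muH) ^ 2 * ‖g‖ ^ 2 := by
    rw [← mul_pow]
    gcongr
    calc ‖m‖ ≤ ‖m - H.toEuclideanLin g‖ + ‖H.toEuclideanLin g‖ := norm_le_norm_sub_add _ _
      _ ≤ ρ * muH * ‖g‖ + M * ‖g‖ := add_le_add hb hHg
      _ = (M + ρ * muH) * ‖g‖ := by ring
  have hstep := integral_comp_sub_smul_le_of_lipschitz_gradient hdiff hlip hu2 θ η
  rw [integral_norm_sq_eq_integral_norm_sub_sq_add hu2] at hstep
  calc _ ≤ _ := hstep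
    _ ≤ f θ - η * ((muH - ρ * muH) * ‖g‖ ^ 2)
        + L * η ^ 2 / 2 * (σ ^ 2 + (M + ρ * muH) ^ 2 * ‖g‖ ^ 2) := by gcongr
    _ = _ := by ring

/-- **Per-step descent inequality for a biased preconditioned step.**
For `f` differentiable with `L`-Lipschitz gradient, a symmetric `H` with
`μ I ⪯ H ⪯ M I`, and a square-integrable random update `û` whose bias
`b = E[û] − H∇f(θ)` satisfies `‖b‖ ≤ ρμ‖∇f(θ)‖` and whose centered second moment is at
most `σ²`, one step `θ − η û` satisfies
`E[f(θ − ηû)] ≤ f(θ) − (ημ(1−ρ) − (Lη²/2)(M+ρμ)²)‖∇f(θ)‖² + (Lη²/2)σ²`. -/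
theorem per_step_descent_inequality
    {Ω : Type*} [MeasurableSpace Ω] (μP : Measure Ω) [IsProbabilityMeasure μP]
    {d : ℕ} (f : EuclideanSpace ℝ (Fin d) → ℝ)
    (L : ℝ) (hL : 0 < L)
    (hdiff : Differentiable ℝ f)
    (hlip : ∀ x y, ‖gradient f x - gradient f y‖ ≤ L * ‖x - y‖)
    (θ : EuclideanSpace ℝ (Fin d))
    (η ρ σ : ℝ) (hη : 0 < η) (hρ0 : 0 ≤ ρ) (hρ1 : ρ < 1) (hσ : 0 ≤ σ)
    (H : Matrix (Fin d) (Fin d) ℝ) (hsymm : H.IsSymm)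
    (muH M : ℝ) (hmuH : 0 < muH) (hM : muH ≤ M)
    (hbounds : ∀ x : EuclideanSpace ℝ (Fin d),
      muH * ‖x‖ ^ 2 ≤ ⟪x, Matrix.toEuclideanLin H x⟫ ∧
      ⟪x, Matrix.toEuclideanLin H x⟫ ≤ M * ‖x‖ ^ 2)
    (u : Ω → EuclideanSpace ℝ (Fin d))
    (hu2 : MemLp u 2 μP)
    (hb : ‖(∫ ω, u ω ∂μP) - Matrix.toEuclideanLin H (gradient f θ)‖
      ≤ ρ * muH * ‖gradient f θ‖)
    (hvar : ∫ ω, ‖u ω - ∫ ω', u ω' ∂μP‖ ^ 2 ∂μP ≤ σ ^ 2) :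
    ∫ ω, f (θ - η • u ω) ∂μP
      ≤ f θ
        - (η * muH * (1 - ρ) - (L * η ^ 2 / 2) * (M + ρ * muH) ^ 2)
          * ‖gradient f θ‖ ^ 2
        + (L * η ^ 2 / 2) * σ ^ 2 :=
  per_step_descent_inequality_general μP f L hL hdiff hlip θ η ρ σ hη H hsymm muH M hmuH hM hbounds
    u hu2 hb hvar
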